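/- Mortal Matrix reduction for satisfiability: Fix d, n ≥ 1 and matrices X₁, …, Xₙ ∈ ℤ^{d×d}, and let R be the semiring (ℤ^{d×d}, +, ·, 0_d, 1_d) of d×d integer matrices. Consider the AC-program Π consisting of the facts p(X₁) ←, …, p(Xₙ) ←, the constraint rule ⊥ ← ¬p(0_d), and the rule p(Y) ← p(Z₁), p(Z₂), Y =_R Z₁ * Z₂. Then Π has an equilibrium model if and only if there exist k ≥ 1 and indices i₁, …, i_k ∈ {1, …, n} with X_{i₁} · X_{i₂} ⋯ X_{i_k} = 0_d. -/

import Mathlib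

/-!
Write `S` for the multiplicative semigroup generated by the `Xᵢ`. For an HT-interpretation
`(J', J)`, satisfaction of `Π` at `H` says exactly: every `p(Xᵢ)` lies in `J'`, both `J'` and `J`
are closed under the product rule, and `p(0_d) ∈ J` (the negation in the constraint is
evaluated at `T`). So `J' ⊇ p(S)` always, and `(p(S), J)` is itself a model whenever `(J, J)` is;
minimality forces an equilibrium model to be `p(S)`, which is a model iff `0_d ∈ S`, i.e. iff
some nonempty product of the `Xᵢ` vanishes.
-/

/-- The two worlds of HT logic. -/
inductive W : Type | H | T
deriving DecidableEq

/-- `W.le w w'` means `w' ≥ w` in the HT order (with `T ≥ H`). -/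
def W.le : W → W → Prop
  | .H, _ => True
  | .T, w' => w' = .T

/-- An HT-interpretation: a pair of sets of (variable-free) atoms with `h ⊆ t`. -/
structure HTI (A : Type*) where
  h : Set A
  t : Set A
  sub : h ⊆ t

/-- The component of a pointed HT-interpretation at world `w`. -/
def HTI.at {A : Type*} (I : HTI A) : W → Set A
  | .H => I.h
  | .T => I.t

/-- Semiring terms built from constants and (global) variables by `+` and `*`. -/
inductive Trm (R : Type) (g : ℕ) : Type
  | const (k : R)
  | var (x : Fin g)
  | add (s t : Trm R g)
  | mul (s t : Trm R g)

/-- Evaluation of a term under an assignment of the global variables. -/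
def Trm.eval {R : Type} [Semiring R] {g : ℕ} (γ : Fin g → R) : Trm R g → R
  | .const k => k
  | .var x => γ x
  | .add s t => s.eval γ + t.eval γ
  | .mul s t => s.eval γ * t.eval γ

/-- Variable-free atoms (the domain being the semiring carrier `R`). -/
abbrev GAtom (P R : Type) : Type := P × List R

/-- Instantiating the arguments of an atom with an assignment `γ`. -/
def instA {P R : Type} {g : ℕ} (γ : Fin g → R) (a : P × List (Fin g ⊕ R)) :
    GAtom P R :=
  (a.1, a.2.map (Sum.elim γ id))

/-- An `AC`-rule `φ ← ψ₁, …, ψₙ, ¬θ₁, …, ¬θ_m` whose head is an atom or `⊥`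
    (`none`), with body atoms, negated body atoms, and body algebraic constraints
    that are equalities between semiring terms; its `g` global variables are
    universally quantified over the carrier `R`. -/
structure NRule (P R : Type) : Type where
  g : ℕ
  head : Option (P × List (Fin g ⊕ R))
  pos : List (P × List (Fin g ⊕ R))
  neg : List (P × List (Fin g ⊕ R))
  eqs : List (Trm R g × Trm R g)

/-- HT satisfaction of a rule at `I_w` (`¬θ = θ → ⊥` is satisfied at `I_{w'}` iff
    `θ` fails at every `w'' ≥ w'`). -/
def NRule.sat {P R : Type} [Semiring R] (I : HTI (GAtom P R)) (w : W)
    (r : NRule P R) : Prop :=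
  ∀ γ : Fin r.g → R, ∀ w', W.le w w' →
    ((∀ a ∈ r.pos, instA γ a ∈ I.at w') ∧
      (∀ a ∈ r.neg, ∀ w'', W.le w' w'' → instA γ a ∉ I.at w'') ∧
      (∀ e ∈ r.eqs, Trm.eval γ e.1 = Trm.eval γ e.2)) →
    (match r.head with
      | some a => instA γ a ∈ I.at w'
      | none => False)

/-- HT satisfaction of a program. -/
def progSat {P R : Type} [Semiring R] (Pr : Set (NRule P R))
    (I : HTI (GAtom P R)) (w : W) : Prop :=
  ∀ r ∈ Pr, r.sat I w

/-- `J` is an equilibrium model of `Pr`. -/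
def EqModel {P R : Type} [Semiring R] (Pr : Set (NRule P R))
    (J : Set (GAtom P R)) : Prop :=
  progSat Pr ⟨J, J, le_refl J⟩ .H ∧
    ∀ J' (h : J' ⊆ J), J' ≠ J → ¬ progSat Pr ⟨J', J, h⟩ .H

section MortalMatrix

/-- The semiring `(ℤ^{d×d}, +, ·, 0_d, 1_d)` of `d×d` integer matrices. -/
abbrev MatR (d : ℕ) : Type := Matrix (Fin d) (Fin d) ℤ

variable {d n : ℕ}

/-- The fact `p(m) ←`. -/
def factRule (m : MatR d) : NRule Unit (MatR d) :=
  ⟨0, some ((), [Sum.inr m]), [], [], []⟩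

/-- The constraint rule `⊥ ← ¬p(0_d)`. -/
def botRule (d : ℕ) : NRule Unit (MatR d) :=
  ⟨0, none, [], [((), [Sum.inr (0 : MatR d)])], []⟩

/-- The rule `p(Y) ← p(Z₁), p(Z₂), Y =_R Z₁ * Z₂`. -/
def prodRule (d : ℕ) : NRule Unit (MatR d) :=
  ⟨3, some ((), [Sum.inl 0]), [((), [Sum.inl 1]), ((), [Sum.inl 2])], [],
    [(Trm.var 0, Trm.mul (Trm.var 1) (Trm.var 2))]⟩

/-- The `AC`-program `Π` of the Mortal Matrix reduction. -/
def mortalProg (X : Fin n → MatR d) : Set (NRule Unit (MatR d)) :=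
  {r | ∃ i : Fin n, r = factRule (X i)} ∪ {botRule d, prodRule d}

theorem Subsemigroup.mem_closure_range_iff_exists_ofFn_prod {M ι : Type*} [Monoid M]
    (X : ι → M) (m : M) :
    m ∈ Subsemigroup.closure (Set.range X) ↔
      ∃ k : ℕ, 1 ≤ k ∧ ∃ f : Fin k → ι, (List.ofFn fun j => X (f j)).prod = m := by
  constructor
  · intro hm
    induction hm using Subsemigroup.closure_induction with
    | mem x hx =>
      obtain ⟨i, rfl⟩ := hx
      exact ⟨1, le_rfl, fun _ => i, by simp⟩
    | mul x y _ _ hx hy =>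
      obtain ⟨k, hk, f, rfl⟩ := hx
      obtain ⟨l, -, g, rfl⟩ := hy
      refine ⟨k + l, by omega, Fin.append f g, ?_⟩
      simp [List.ofFn_add, Fin.append_right]
  · rintro ⟨k, hk, f, rfl⟩
    induction k, hk using Nat.le_induction with
    | base => simpa using Subsemigroup.subset_closure (Set.mem_range_self (f 0))
    | succ k _ ih =>
      rw [List.ofFn_succ, List.prod_cons]
      exact mul_mem (Subsemigroup.subset_closure (Set.mem_range_self _)) (ih _)

def pAtom {R : Type} (m : R) : GAtom Unit R := ((), [m])

lemma pAtom_injective {R : Type} : Function.Injective (pAtom (R := R)) := by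
  intro a b h
  simpa [pAtom] using h

def MulClosedAtoms (J : Set (GAtom Unit (MatR d))) : Prop :=
  ∀ a b, pAtom a ∈ J → pAtom b ∈ J → pAtom (a * b) ∈ J

lemma factRule_sat_iff (I : HTI (GAtom Unit (MatR d))) (m : MatR d) :
    (factRule m).sat I .H ↔ pAtom m ∈ I.h := by
  constructor
  · intro h
    exact h Fin.elim0 .H trivial ⟨nofun, nofun, nofun⟩
  · rintro h γ (_ | _) - -
    · exact h
    · exact I.sub h

lemma botRule_sat_iff (I : HTI (GAtom Unit (MatR d))) :
    (botRule d).sat I .H ↔ pAtom 0 ∈ I.t := by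
  constructor
  · intro h
    by_contra h0
    refine h Fin.elim0 .H trivial ⟨nofun, ?_, nofun⟩
    intro a ha w'' _
    rw [List.mem_singleton.1 ha]
    cases w''
    · exact fun hm => h0 (I.sub hm)
    · exact h0
  · rintro h0 γ w' - ⟨-, hneg, -⟩
    exact hneg _ (List.mem_singleton_self _) .T (by cases w' <;> trivial) h0

lemma prodRule_sat_iff (I : HTI (GAtom Unit (MatR d))) :
    (prodRule d).sat I .H ↔ MulClosedAtoms I.h ∧ MulClosedAtoms I.t := by
  have key : (prodRule d).sat I .H ↔ ∀ w a b, pAtom a ∈ I.at w → pAtom b ∈ I.at w →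
      pAtom (a * b) ∈ I.at w := by
    constructor
    · intro h w a b ha hb
      refine h ![a * b, a, b] w trivial ⟨?_, nofun, ?_⟩
      · intro x hx
        rcases List.mem_pair.1 hx with rfl | rfl
        exacts [ha, hb]
      · intro e he
        rw [List.mem_singleton.1 he]
        rfl
    · rintro h (γ : Fin 3 → MatR d) w - ⟨hpos, -, heqs⟩
      have hγ : γ 0 = γ 1 * γ 2 := heqs _ (List.mem_singleton_self _)
      show pAtom (γ 0) ∈ I.at w
      rw [hγ]
      exact h w _ _ (hpos _ (List.mem_pair.2 (.inl rfl))) (hpos _ (List.mem_pair.2 (.inr rfl)))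
  rw [key]
  exact ⟨fun h => ⟨h .H, h .T⟩, fun h w => w.casesOn h.1 h.2⟩

lemma progSat_mortalProg_iff (X : Fin n → MatR d) (I : HTI (GAtom Unit (MatR d))) :
    progSat (mortalProg X) I .H ↔ (∀ i, pAtom (X i) ∈ I.h) ∧ pAtom 0 ∈ I.t ∧
      MulClosedAtoms I.h ∧ MulClosedAtoms I.t := by
  simp only [progSat, mortalProg, Set.mem_union, Set.mem_ofPred_eq, Set.mem_insert_iff,
    Set.mem_singleton_iff, or_imp, forall_and, forall_exists_index, forall_eq,
    forall_comm (α := NRule Unit (MatR d)), factRule_sat_iff, botRule_sat_iff, prodRule_sat_iff]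

def closureAtoms (X : Fin n → MatR d) : Set (GAtom Unit (MatR d)) :=
  pAtom '' (Subsemigroup.closure (Set.range X) : Set (MatR d))

lemma pAtom_mem_closureAtoms {X : Fin n → MatR d} {m : MatR d} :
    pAtom m ∈ closureAtoms X ↔ m ∈ Subsemigroup.closure (Set.range X) :=
  pAtom_injective.mem_set_image

lemma mulClosedAtoms_closureAtoms (X : Fin n → MatR d) : MulClosedAtoms (closureAtoms X) := by
  intro a b ha hb
  rw [pAtom_mem_closureAtoms] at *
  exact mul_mem ha hb

lemma closureAtoms_subset {X : Fin n → MatR d} {J : Set (GAtom Unit (MatR d))}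
    (hX : ∀ i, pAtom (X i) ∈ J) (hJ : MulClosedAtoms J) : closureAtoms X ⊆ J := by
  rintro _ ⟨m, hm, rfl⟩
  induction hm using Subsemigroup.closure_induction with
  | mem x hx =>
    obtain ⟨i, rfl⟩ := hx
    exact hX i
  | mul x y _ _ hx hy => exact hJ x y hx hy

lemma eqModel_mortalProg_iff (X : Fin n → MatR d) (J : Set (GAtom Unit (MatR d))) :
    EqModel (mortalProg X) J ↔
      J = closureAtoms X ∧ (0 : MatR d) ∈ Subsemigroup.closure (Set.range X) := by
  have hX : ∀ i, pAtom (X i) ∈ closureAtoms X := fun i =>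
    pAtom_mem_closureAtoms.2 (Subsemigroup.subset_closure (Set.mem_range_self i))
  constructor
  · rintro ⟨hsat, hmin⟩
    obtain ⟨hXJ, h0, hmul, -⟩ := (progSat_mortalProg_iff X _).1 hsat
    have hsub := closureAtoms_subset hXJ hmul
    have hJ : J = closureAtoms X := by
      by_contra hne
      exact hmin _ hsub (Ne.symm hne) ((progSat_mortalProg_iff X _).2
        ⟨hX, h0, mulClosedAtoms_closureAtoms X, hmul⟩)
    exact ⟨hJ, pAtom_mem_closureAtoms.1 (hJ ▸ h0)⟩
  · rintro ⟨rfl, h0⟩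
    refine ⟨(progSat_mortalProg_iff X _).2 ⟨hX, pAtom_mem_closureAtoms.2 h0,
      mulClosedAtoms_closureAtoms X, mulClosedAtoms_closureAtoms X⟩, ?_⟩
    intro J' hsub hne hsat
    obtain ⟨hXJ', -, hmul, -⟩ := (progSat_mortalProg_iff X _).1 hsat
    exact hne (hsub.antisymm (closureAtoms_subset hXJ' hmul))

theorem mortal_matrix_sat_general (X : Fin n → MatR d) :
    (∃ I : Set (GAtom Unit (MatR d)), EqModel (mortalProg X) I) ↔
      ∃ k : ℕ, 1 ≤ k ∧ ∃ f : Fin k → Fin n,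
        (List.ofFn fun j => X (f j)).prod = (0 : MatR d) := by
  rw [← Subsemigroup.mem_closure_range_iff_exists_ofFn_prod]
  simp only [eqModel_mortalProg_iff, exists_eq_left]

/-- **Mortal Matrix reduction for satisfiability**: for `d, n ≥ 1` and matrices
    `X₁, …, Xₙ ∈ ℤ^{d×d}`, the program consisting of the facts `p(Xᵢ) ←`, the
    constraint rule `⊥ ← ¬p(0_d)` and the rule `p(Y) ← p(Z₁), p(Z₂), Y =_R Z₁ * Z₂`
    has an equilibrium model iff some nonempty product of the matrices is `0_d`. -/
theorem mortal_matrix_sat (hd : 1 ≤ d) (hn : 1 ≤ n) (X : Fin n → MatR d) :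
    (∃ I : Set (GAtom Unit (MatR d)), EqModel (mortalProg X) I) ↔
      ∃ k : ℕ, 1 ≤ k ∧ ∃ f : Fin k → Fin n,
        (List.ofFn fun j => X (f j)).prod = (0 : MatR d) :=
  mortal_matrix_sat_general X

end MortalMatrix
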